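/- Let G^{Init} be a rooted binary tree and 𝒢 a set of k ≥ 2 pairwise separated subtrees covering all leaves of G^{Init}. Then any triplet-respecting supertree G^{TR} for 𝒢 contains, for every node x of G^{Init} with |𝒢(x)| ≥ 2, a node y with L(y) = L(x), and these nodes form a subset of nodes of G^{TR} whose induced ancestor relation coincides with the ancestor relation of the corresponding nodes in G^{Init}. -/

import Mathlib

inductive BTree (α : Type) where
  | leaf : α → BTree α
  | node : BTree α → BTree α → BTree α
deriving DecidableEq

namespace BTree

variable {α : Type} [DecidableEq α] {σ : Type} [DecidableEq σ] {γ : Type} [DecidableEq γ]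

/-- leaf (label) set of a tree -/
def leaves : BTree α → Finset α
  | leaf a => {a}
  | node l r => leaves l ∪ leaves r

/-- the leaf labels are pairwise distinct -/
def nodupLeaves : BTree α → Prop
  | leaf _ => True
  | node l r => nodupLeaves l ∧ nodupLeaves r ∧ Disjoint (leaves l) (leaves r)

/-- the (unordered) bipartition `(Ll, Lr)` is compatible with the tree:
the whole leaf set lies in one part, or the leaf sets of the two root child
subtrees lie in opposite parts. -/
def compatible : BTree α → Finset α → Finset α → Prop
  | leaf a, Ll, Lr => a ∈ Ll ∨ a ∈ Lr
  | node l r, Ll, Lr =>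
      leaves l ∪ leaves r ⊆ Ll ∨ leaves l ∪ leaves r ⊆ Lr ∨
      (leaves l ⊆ Ll ∧ leaves r ⊆ Lr) ∨ (leaves l ⊆ Lr ∧ leaves r ⊆ Ll)

/-- union of the leaf sets of a list of trees -/
def unionLeaves (Gs : List (BTree α)) : Finset α :=
  Gs.foldr (fun g acc => leaves g ∪ acc) ∅

/-- `(Ll, Lr)` is a bipartition of the union of the leaf sets (both parts
nonempty) compatible with every tree in the list. -/
def isCompBip (Gs : List (BTree α)) (Ll Lr : Finset α) : Prop :=
  Ll ∪ Lr = unionLeaves Gs ∧ Disjoint Ll Lr ∧ Ll.Nonempty ∧ Lr.Nonempty ∧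
    ∀ G ∈ Gs, compatible G Ll Lr

/-- restriction `G|_L` : remove the leaves not in `L` and suppress the
resulting degree-2 nodes; `none` if no leaf of `G` lies in `L`. -/
def restrict : BTree α → Finset α → Option (BTree α)
  | leaf a, L => if a ∈ L then some (leaf a) else none
  | node l r, L =>
      match restrict l L, restrict r L with
      | some l', some r' => some (node l' r')
      | some l', none => some l'
      | none, some r' => some r'
      | none, none => none

/-- isomorphism of rooted leaf-labeled trees (children are unordered) -/
inductive Iso : BTree α → BTree α → Prop
  | leaf (a : α) : Iso (leaf a) (leaf a)
  | node {l r l' r' : BTree α} : Iso l l' → Iso r r' → Iso (node l r) (node l' r')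
  | swap {l r l' r' : BTree α} : Iso l r' → Iso r l' → Iso (node l r) (node l' r')

/-- `G` displays `G'` : the restriction of `G` to the leaves of `G'` is
isomorphic to `G'` (preserving leaf labels). -/
def displays (G G' : BTree α) : Prop :=
  ∃ t, restrict G (leaves G') = some t ∧ Iso t G'

/-- `Subtree t T` : `t` is a complete rooted subtree of `T` (i.e. `t = T[x]`
for some node `x` of `T`).  Equivalently, the root of `T` is a (weak)
ancestor of the root of `t`. -/
inductive Subtree : BTree α → BTree α → Prop
  | refl (t : BTree α) : Subtree t t
  | left {t l r : BTree α} : Subtree t l → Subtree t (node l r)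
  | right {t l r : BTree α} : Subtree t r → Subtree t (node l r)

/-- two nodes (complete subtrees) are separated: neither is a (weak)
ancestor of the other -/
def separated (u v : BTree α) : Prop := ¬ Subtree u v ∧ ¬ Subtree v u

/-- the subtree rooted at the lowest common ancestor of the leaf set `L` -/
def lcaSub : BTree α → Finset α → BTree α
  | leaf a, _ => leaf a
  | node l r, L =>
      if L ⊆ leaves l then lcaSub l L
      else if L ⊆ leaves r then lcaSub r L
      else node l r

/-- `T1` and `T2` induce the same rooted triplet topology on `{a, b, c}` -/
def sameTriplet (T1 T2 : BTree α) (a b c : α) : Prop :=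
  ∃ t1 t2, restrict T1 {a, b, c} = some t1 ∧ restrict T2 {a, b, c} = some t2 ∧ Iso t1 t2

/-- `GTR` is triplet respecting w.r.t. `GInit` and the family `Gs` : for any
three leaves taken from three distinct trees of `Gs`, `GInit` and `GTR`
induce the same rooted triplet topology. -/
def tripletRespecting (GInit GTR : BTree α) (Gs : List (BTree α)) : Prop :=
  ∀ G1 ∈ Gs, ∀ G2 ∈ Gs, ∀ G3 ∈ Gs, G1 ≠ G2 → G1 ≠ G3 → G2 ≠ G3 →
    ∀ a ∈ leaves G1, ∀ b ∈ leaves G2, ∀ c ∈ leaves G3, sameTriplet GInit GTR a b c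

/-- at least two (distinct) trees of `Gs` are subtrees of `t` : `|𝒢(t)| ≥ 2` -/
def atLeastTwo (Gs : List (BTree α)) (t : BTree α) : Prop :=
  ∃ Gi ∈ Gs, ∃ Gj ∈ Gs, Gi ≠ Gj ∧ Subtree Gi t ∧ Subtree Gj t

/-- `Graft T' T R` : `R` is obtained from `T` by grafting `T'` at some node
`x*` of `T`, i.e. subdividing the edge above `x*` (or adding a new root if
`x*` is the root) and attaching `T'` as the new sibling of `x*`. -/
inductive Graft (T' : BTree α) : BTree α → BTree α → Prop
  | atRootL (T : BTree α) : Graft T' T (node T' T)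
  | atRootR (T : BTree α) : Graft T' T (node T T')
  | left {l r g : BTree α} : Graft T' l g → Graft T' (node l r) (node g r)
  | right {l r g : BTree α} : Graft T' r g → Graft T' (node l r) (node l g)

/-- number of edges from the root of `u` down to the node `v`, if `v` is a
node (complete subtree) of `u` -/
def edist : BTree σ → BTree σ → Option ℕ
  | leaf a, v => if leaf a = v then some 0 else none
  | node l r, v =>
      if node l r = v then some 0 else
      match edist l v, edist r v with
      | some n, _ => some (n + 1)
      | none, some n => some (n + 1)
      | none, none => none

/-- number of nodes strictly between an ancestor `u` and a descendant `v` -/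
def inter (u v : BTree σ) : ℕ := (edist u v).getD 1 - 1

/-- node (`lca`) of the species tree `S` associated to a set `L` of genes -/
def specOf (S : BTree σ) (s : γ → σ) (L : Finset γ) : BTree σ := lcaSub S (L.image s)

/-- the species-tree node `s(x)` associated with a gene-tree node `x`
(lca of the species of the leaves below `x`) -/
def spec (S : BTree σ) (s : γ → σ) (t : BTree γ) : BTree σ := specOf S s (leaves t)

/-- the local LCA-reconciliation cost of a node whose own mapping is `su`
and whose children map to `sl` and `sr` -/
def localCost (su sl sr : BTree σ) : ℕ :=
  inter su sl + inter su sr +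
    (if su = sl ∧ su = sr then 1 else if su = sl ∨ su = sr then 2 else 0)

/-- number of duplication nodes of the LCA-reconciliation -/
def dupCount (S : BTree σ) (s : γ → σ) : BTree γ → ℕ
  | leaf _ => 0
  | node l r =>
      dupCount S s l + dupCount S s r +
      (if spec S s (node l r) = spec S s l ∨ spec S s (node l r) = spec S s r then 1 else 0)

/-- minimum number of losses of the LCA-reconciliation: for each edge `(x,c)`,
`inter(s(x), s(c))` losses, plus one more loss for each child `c` of a
duplication node `x` with `s(c) ≠ s(x)` -/
def lossCount (S : BTree σ) (s : γ → σ) : BTree γ → ℕ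
  | leaf _ => 0
  | node l r =>
      lossCount S s l + lossCount S s r +
      (if spec S s (node l r) = spec S s l ∨ spec S s (node l r) = spec S s r then
        (inter (spec S s (node l r)) (spec S s l) +
          if spec S s l = spec S s (node l r) then 0 else 1) +
        (inter (spec S s (node l r)) (spec S s r) +
          if spec S s r = spec S s (node l r) then 0 else 1)
      else
        inter (spec S s (node l r)) (spec S s l) + inter (spec S s (node l r)) (spec S s r))

/-- sum over all internal nodes of the local LCA-reconciliation costs -/
def totalLocal (S : BTree σ) (s : γ → σ) : BTree γ → ℕ
  | leaf _ => 0
  | node l r =>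
      totalLocal S s l + totalLocal S s r +
      localCost (spec S s (node l r)) (spec S s l) (spec S s r)

/-- `G` is a supertree for `Gs` : a tree on the union of the leaf sets
(each leaf once) displaying every tree of `Gs` -/
def isSupertree (Gs : List (BTree γ)) (G : BTree γ) : Prop :=
  leaves G = unionLeaves Gs ∧ nodupLeaves G ∧ ∀ Gi ∈ Gs, displays G Gi

/-- `MinSGT` : minimum LCA-reconciliation cost over all supertrees -/
noncomputable def reconMin (S : BTree σ) (s : γ → σ) (Gs : List (BTree γ)) : ℕ :=
  sInf {c | ∃ G : BTree γ, isSupertree Gs G ∧ totalLocal S s G = c}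

/-- restrictions `G_i|_L` of the trees of the list (dropping empty ones) -/
def restrictList (Gs : List (BTree γ)) (L : Finset γ) : List (BTree γ) :=
  Gs.filterMap fun G => restrict G L

/-- the four possible ordered choices for distributing a tree into the two
parts of a bipartition: whole tree left, whole tree right, left subtree
left & right subtree right, left subtree right & right subtree left -/
def pick : BTree α → ℕ → Finset α × Finset α
  | G, 0 => (leaves G, ∅)
  | G, 1 => (∅, leaves G)
  | node l r, 2 => (leaves l, leaves r)
  | node l r, _ => (leaves r, leaves l)
  | G, _ => (∅, leaves G)

/-- left part produced by a distribution `f` of choices -/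
def partsLeft (Gs : List (BTree α)) (f : Fin Gs.length → Fin 4) : Finset α :=
  Finset.univ.biUnion fun i => (pick (Gs.get i) (f i).val).1

/-- right part produced by a distribution `f` of choices -/
def partsRight (Gs : List (BTree α)) (f : Fin Gs.length → Fin 4) : Finset α :=
  Finset.univ.biUnion fun i => (pick (Gs.get i) (f i).val).2

/-- the complete subtree at a position (path from the root) -/
def subtreeAt : BTree α → List Bool → Option (BTree α)
  | t, [] => some t
  | leaf _, _ :: _ => none
  | node l _, false :: p => subtreeAt l p
  | node _ r, true :: p => subtreeAt r p

/-- the set of positions of internal nodes -/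
def internalPos : BTree α → Finset (List Bool)
  | leaf _ => ∅
  | node l r =>
      insert [] ((internalPos l).image (List.cons false) ∪
        (internalPos r).image (List.cons true))

end BTree

/-- labeled gene trees: each internal node carries `true` (Dup) or `false` (Spec) -/
inductive LTree (α : Type) where
  | leaf : α → LTree α
  | node : Bool → LTree α → LTree α → LTree α
deriving DecidableEq

namespace LTree

variable {α : Type} [DecidableEq α]

def leaves : LTree α → Finset α
  | leaf a => {a}
  | node _ l r => leaves l ∪ leaves r

/-- underlying unlabeled tree -/
def shape : LTree α → BTree α
  | leaf a => BTree.leaf a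
  | node _ l r => BTree.node (shape l) (shape r)

/-- the event label of the root (`none` for a leaf) -/
def rootEv : LTree α → Option Bool
  | leaf _ => none
  | node e _ _ => some e

inductive Subtree : LTree α → LTree α → Prop
  | refl (t : LTree α) : Subtree t t
  | left {t l r : LTree α} {e : Bool} : Subtree t l → Subtree t (node e l r)
  | right {t l r : LTree α} {e : Bool} : Subtree t r → Subtree t (node e l r)

/-- the subtree rooted at the lowest common ancestor of the leaf set `L` -/
def lcaSub : LTree α → Finset α → LTree α
  | leaf a, _ => leaf a
  | node e l r, L =>
      if L ⊆ leaves l then lcaSub l L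
      else if L ⊆ leaves r then lcaSub r L
      else node e l r

/-- `G` displays `G'` (topologically, ignoring labels) -/
def displaysL (G G' : LTree α) : Prop := BTree.displays (shape G) (shape G')

/-- `(G, ev_G)` is label-compatible with `(G', ev_{G'})` : every internal
node `x'` of `G'` has the same event label as `lca_G(L(x'))` -/
def labelCompatible (G G' : LTree α) : Prop :=
  ∀ (e : Bool) (l r : LTree α), Subtree (node e l r) G' →
    rootEv (lcaSub G (leaves (node e l r))) = some e

end LTree

/-! Let `y` be the lowest common ancestor of `L(x)` in `G^{TR}`. Since `x` contains two trees of
`𝒢`, there are leaves `a`, `b` of `x` on different sides of `y` that come from different trees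
of `𝒢`. A leaf `c` below `y` but outside `x` belongs to a third tree of `𝒢` (every tree of `𝒢`
lies below `x` or is disjoint from it), and `G^{Init}` displays `ab|c` while `G^{TR}` displays
`ac|b` or `bc|a`, against triplet respect. Hence `L(y) = L(x)`. In a tree with distinct leaf
labels, ancestry between nodes is containment of their leaf sets, which gives the second part. -/

theorem Finset.exists_mem_mem_apply_ne {α β : Type*} [DecidableEq α] {A B : Finset α}
    (f : α → β) (hA : A.Nonempty) (hB : B.Nonempty) {d e : α} (hd : d ∈ A ∪ B) (he : e ∈ A ∪ B)
    (hde : f d ≠ f e) : ∃ a ∈ A, ∃ b ∈ B, f a ≠ f b := by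
  by_contra! hconst
  obtain ⟨a₀, ha₀⟩ := hA
  obtain ⟨b₀, hb₀⟩ := hB
  have hval : ∀ z ∈ A ∪ B, f z = f b₀ := by
    intro z hz
    rcases Finset.mem_union.mp hz with hz | hz
    · exact hconst z hz b₀ hb₀
    · exact (hconst a₀ ha₀ z hz).symm.trans (hconst a₀ ha₀ b₀ hb₀)
  exact hde ((hval d hd).trans (hval e he).symm)

namespace BTree

variable {α : Type}

theorem Subtree.trans {t u v : BTree α} (htu : Subtree t u) (huv : Subtree u v) : Subtree t v := by
  induction huv with
  | refl => exact htu
  | left _ ih => exact .left ih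
  | right _ ih => exact .right ih

variable [DecidableEq α]

theorem leaves_nonempty : ∀ t : BTree α, t.leaves.Nonempty
  | leaf a => ⟨a, Finset.mem_singleton_self a⟩
  | node l _ => (leaves_nonempty l).mono Finset.subset_union_left

theorem Subtree.leaves_subset {u v : BTree α} (h : Subtree u v) : u.leaves ⊆ v.leaves := by
  induction h with
  | refl => exact Finset.Subset.refl _
  | left _ ih => exact ih.trans Finset.subset_union_left
  | right _ ih => exact ih.trans Finset.subset_union_right

theorem Subtree.nodupLeaves {u v : BTree α} (h : Subtree u v) (hv : v.nodupLeaves) :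
    u.nodupLeaves := by
  induction h with
  | refl => exact hv
  | left _ ih => exact ih hv.1
  | right _ ih => exact ih hv.2.1

theorem subtree_or_subtree_or_disjoint {T u v : BTree α} (hT : T.nodupLeaves)
    (hu : Subtree u T) (hv : Subtree v T) :
    Subtree u v ∨ Subtree v u ∨ Disjoint u.leaves v.leaves := by
  induction T with
  | leaf => cases hu; cases hv; exact .inl (.refl _)
  | node l r ihl ihr =>
    obtain ⟨hl, hr, hlr⟩ := hT
    cases hu with
    | refl => exact .inr (.inl hv)
    | left hu =>
      cases hv with
      | refl => exact .inl (.left hu)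
      | left hv => exact ihl hl hu hv
      | right hv => exact .inr (.inr (hlr.mono hu.leaves_subset hv.leaves_subset))
    | right hu =>
      cases hv with
      | refl => exact .inl (.right hu)
      | left hv => exact .inr (.inr (hlr.symm.mono hu.leaves_subset hv.leaves_subset))
      | right hv => exact ihr hr hu hv

theorem Subtree.eq_of_leaves_subset {u v : BTree α} (hv : v.nodupLeaves) (h : Subtree u v)
    (hle : v.leaves ⊆ u.leaves) : u = v := by
  cases h with
  | refl => rfl
  | @left l r h =>
    obtain ⟨a, ha⟩ := leaves_nonempty r
    exact absurd (h.leaves_subset (hle (Finset.mem_union_right _ ha)))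
      (Finset.disjoint_right.mp hv.2.2 ha)
  | @right l r h =>
    obtain ⟨a, ha⟩ := leaves_nonempty l
    exact absurd (h.leaves_subset (hle (Finset.mem_union_left _ ha)))
      (Finset.disjoint_left.mp hv.2.2 ha)

theorem subtree_iff_leaves_subset {T u v : BTree α} (hT : T.nodupLeaves)
    (hu : Subtree u T) (hv : Subtree v T) : Subtree v u ↔ v.leaves ⊆ u.leaves := by
  refine ⟨Subtree.leaves_subset, fun hle => ?_⟩
  rcases subtree_or_subtree_or_disjoint hT hu hv with h | h | h
  · rw [h.eq_of_leaves_subset (hv.nodupLeaves hT) hle]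
    exact .refl _
  · exact h
  · obtain ⟨a, ha⟩ := leaves_nonempty v
    exact absurd (hle ha) (Finset.disjoint_right.mp h ha)

theorem restrict_eq_none_iff {T : BTree α} {L : Finset α} :
    restrict T L = none ↔ Disjoint T.leaves L := by
  induction T with
  | leaf a => by_cases ha : a ∈ L <;> simp [restrict, leaves, ha]
  | node l r ihl ihr =>
    simp only [restrict, leaves, Finset.disjoint_union_left, ← ihl, ← ihr]
    rcases restrict l L <;> rcases restrict r L <;> simp

theorem restrict_leaves {T t : BTree α} {L : Finset α} (h : restrict T L = some t) :
    t.leaves = T.leaves ∩ L := by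
  induction T generalizing t with
  | leaf b =>
    by_cases hb : b ∈ L <;> simp only [restrict, hb, if_true, if_false, reduceCtorEq,
      Option.some.injEq] at h
    subst h
    simp [leaves, hb]
  | node l r ihl ihr =>
    simp only [restrict] at h
    have hempty : ∀ {w : BTree α}, restrict w L = none → w.leaves ∩ L = ∅ := fun hw =>
      Finset.disjoint_iff_inter_eq_empty.mp (restrict_eq_none_iff.mp hw)
    rcases hl : restrict l L with _ | l' <;> rcases hr : restrict r L with _ | r' <;>
      simp only [hl, hr, reduceCtorEq, Option.some.injEq] at h <;> subst h <;>
      simp only [leaves, Finset.union_inter_distrib_right]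
    · rw [hempty hl, ihr hr, Finset.empty_union]
    · rw [hempty hr, ihl hl, Finset.union_empty]
    · rw [ihl hl, ihr hr]

theorem restrict_nodupLeaves {T t : BTree α} {L : Finset α} (hT : T.nodupLeaves)
    (h : restrict T L = some t) : t.nodupLeaves := by
  induction T generalizing t with
  | leaf b =>
    by_cases hb : b ∈ L <;> simp only [restrict, hb, if_true, if_false, reduceCtorEq,
      Option.some.injEq] at h
    subst h
    trivial
  | node l r ihl ihr =>
    obtain ⟨hl', hr', hlr⟩ := hT
    simp only [restrict] at h
    rcases hl : restrict l L with _ | l' <;> rcases hr : restrict r L with _ | r' <;>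
      simp only [hl, hr, reduceCtorEq, Option.some.injEq] at h <;> subst h
    · exact ihr hr' hr
    · exact ihl hl' hl
    · refine ⟨ihl hl' hl, ihr hr' hr, ?_⟩
      rw [restrict_leaves hl, restrict_leaves hr]
      exact hlr.mono Finset.inter_subset_left Finset.inter_subset_left

theorem restrict_subtree {T t x u : BTree α} {L : Finset α} (hT : restrict T L = some t)
    (hx : Subtree x T) (hu : restrict x L = some u) : Subtree u t := by
  induction hx generalizing t with
  | refl => cases hT.symm.trans hu; exact .refl u
  | @left l r hx ih =>
    simp only [restrict] at hT
    rcases hl : restrict l L with _ | l'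
    · have hxL : Disjoint x.leaves L :=
        (restrict_eq_none_iff.mp hl).mono_left hx.leaves_subset
      rw [← restrict_eq_none_iff, hu] at hxL
      cases hxL
    · rcases hr : restrict r L with _ | r' <;>
        simp only [hl, hr, Option.some.injEq] at hT <;> subst hT
      · exact ih hl
      · exact .left (ih hl)
  | @right l r hx ih =>
    simp only [restrict] at hT
    rcases hr : restrict r L with _ | r'
    · have hxL : Disjoint x.leaves L :=
        (restrict_eq_none_iff.mp hr).mono_left hx.leaves_subset
      rw [← restrict_eq_none_iff, hu] at hxL
      cases hxL
    · rcases hl : restrict l L with _ | l' <;>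
        simp only [hl, hr, Option.some.injEq] at hT <;> subst hT
      · exact ih hr
      · exact .right (ih hr)

theorem Iso.leaves_eq {t₁ t₂ : BTree α} (h : Iso t₁ t₂) : t₁.leaves = t₂.leaves := by
  induction h with
  | leaf => rfl
  | node _ _ ihl ihr => simp only [leaves, ihl, ihr]
  | swap _ _ ihl ihr => simp only [leaves, ihl, ihr, Finset.union_comm]

theorem Iso.exists_subtree_leaves_eq {t₁ t₂ u : BTree α} (h : Iso t₁ t₂) (hu : Subtree u t₁) :
    ∃ u', Subtree u' t₂ ∧ u'.leaves = u.leaves := by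
  induction h generalizing u with
  | leaf => exact ⟨u, hu, rfl⟩
  | node hl hr ihl ihr =>
    cases hu with
    | refl => exact ⟨_, .refl _, by simp only [leaves, hl.leaves_eq, hr.leaves_eq]⟩
    | left hu => obtain ⟨u', hu', he⟩ := ihl hu; exact ⟨u', .left hu', he⟩
    | right hu => obtain ⟨u', hu', he⟩ := ihr hu; exact ⟨u', .right hu', he⟩
  | swap hl hr ihl ihr =>
    cases hu with
    | refl => exact ⟨_, .refl _, by simp only [leaves, hl.leaves_eq, hr.leaves_eq,
        Finset.union_comm]⟩
    | left hu => obtain ⟨u', hu', he⟩ := ihl hu; exact ⟨u', .right hu', he⟩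
    | right hu => obtain ⟨u', hu', he⟩ := ihr hu; exact ⟨u', .left hu', he⟩

theorem lcaSub_subtree : ∀ (T : BTree α) (L : Finset α), Subtree (lcaSub T L) T
  | leaf _, _ => .refl _
  | node l r, L => by
    simp only [lcaSub]
    split_ifs
    · exact .left (lcaSub_subtree l L)
    · exact .right (lcaSub_subtree r L)
    · exact .refl _

theorem subset_leaves_lcaSub : ∀ {T : BTree α} {L : Finset α}, L ⊆ T.leaves →
    L ⊆ (lcaSub T L).leaves
  | leaf _, _, h => h
  | node l r, L, h => by
    simp only [lcaSub]
    split_ifs with hl hr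
    · exact subset_leaves_lcaSub hl
    · exact subset_leaves_lcaSub hr
    · exact h

theorem not_subset_of_lcaSub_eq_node : ∀ {T : BTree α} {L : Finset α} {yl yr : BTree α},
    lcaSub T L = node yl yr → ¬ L ⊆ yl.leaves ∧ ¬ L ⊆ yr.leaves
  | leaf _, _, _, _, h => by cases h
  | node l r, L, yl, yr, h => by
    simp only [lcaSub] at h
    split_ifs at h with hl hr
    · exact not_subset_of_lcaSub_eq_node h
    · exact not_subset_of_lcaSub_eq_node h
    · cases h; exact ⟨hl, hr⟩

theorem mem_unionLeaves {Gs : List (BTree α)} {a : α} :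
    a ∈ unionLeaves Gs ↔ ∃ G ∈ Gs, a ∈ G.leaves := by
  induction Gs with
  | nil => simp [unionLeaves]
  | cons G Gs ih => simp only [unionLeaves, List.foldr_cons, Finset.mem_union] at ih ⊢; simp [ih]

theorem exists_lcaSub_eq_node_apply_ne {β : Type*} {T : BTree α} {L : Finset α}
    (hL : L ⊆ T.leaves) (f : α → β) {p q : α} (hp : p ∈ L) (hq : q ∈ L) (hpq : f p ≠ f q) :
    ∃ yl yr, lcaSub T L = node yl yr ∧
      ∃ a ∈ L, a ∈ yl.leaves ∧ ∃ b ∈ L, b ∈ yr.leaves ∧ f a ≠ f b := by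
  have hLy := subset_leaves_lcaSub hL
  rcases hyeq : lcaSub T L with z | ⟨yl, yr⟩
  · rw [hyeq] at hLy
    have hpz := Finset.mem_singleton.mp (hLy hp)
    have hqz := Finset.mem_singleton.mp (hLy hq)
    exact absurd (by rw [hpz, hqz]) hpq
  rw [hyeq] at hLy
  obtain ⟨hnl, hnr⟩ := not_subset_of_lcaSub_eq_node hyeq
  have hsplit : L = L ∩ yl.leaves ∪ L ∩ yr.leaves := by
    rw [← Finset.inter_union_distrib_left]
    exact (Finset.inter_eq_left.mpr hLy).symm
  have hne : ∀ {w w' : BTree α}, ¬ L ⊆ w'.leaves → L ⊆ w.leaves ∪ w'.leaves →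
      (L ∩ w.leaves).Nonempty := by
    intro w w' hn hcov
    obtain ⟨d, hd, hdn⟩ := Finset.not_subset.mp hn
    exact ⟨d, Finset.mem_inter.mpr ⟨hd, (Finset.mem_union.mp (hcov hd)).resolve_right hdn⟩⟩
  obtain ⟨a, ha, b, hb, hab⟩ := Finset.exists_mem_mem_apply_ne f (hne hnr hLy)
    (hne hnl (hLy.trans (Finset.union_comm yl.leaves yr.leaves).subset))
    (hsplit ▸ hp) (hsplit ▸ hq) hpq
  obtain ⟨haL, hal⟩ := Finset.mem_inter.mp ha
  obtain ⟨hbL, hbr⟩ := Finset.mem_inter.mp hb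
  exact ⟨yl, yr, rfl, a, haL, hal, b, hbL, hbr, hab⟩

/-- `T` displays the rooted triplet `ab|c`. -/
def displaysTriplet (T : BTree α) (a b c : α) : Prop :=
  ∃ u, Subtree u T ∧ a ∈ u.leaves ∧ b ∈ u.leaves ∧ c ∉ u.leaves

theorem displaysTriplet.swap {T : BTree α} {a b c : α} (h : T.displaysTriplet a b c) :
    T.displaysTriplet b a c :=
  let ⟨u, hu, ha, hb, hc⟩ := h
  ⟨u, hu, hb, ha, hc⟩

theorem displaysTriplet.restrict {T t : BTree α} {L : Finset α} {a b c : α}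
    (h : T.displaysTriplet a b c) (hT : restrict T L = some t) (ha : a ∈ L) (hb : b ∈ L) :
    t.displaysTriplet a b c := by
  obtain ⟨u, hu, hau, hbu, hcu⟩ := h
  obtain ⟨u', hu'⟩ := Option.ne_none_iff_exists'.mp fun hnone =>
    Finset.disjoint_left.mp (restrict_eq_none_iff.mp hnone) hau ha
  have hleaves := restrict_leaves hu'
  refine ⟨u', restrict_subtree hT hu hu', ?_, ?_, ?_⟩ <;> rw [hleaves, Finset.mem_inter]
  exacts [⟨hau, ha⟩, ⟨hbu, hb⟩, fun hc => hcu hc.1]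

theorem displaysTriplet.of_iso {t₁ t₂ : BTree α} {a b c : α} (h : t₁.displaysTriplet a b c)
    (hiso : Iso t₁ t₂) : t₂.displaysTriplet a b c := by
  obtain ⟨u, hu, hau, hbu, hcu⟩ := h
  obtain ⟨u', hu', he⟩ := hiso.exists_subtree_leaves_eq hu
  exact ⟨u', hu', he ▸ hau, he ▸ hbu, he ▸ hcu⟩

theorem not_displaysTriplet_of_displaysTriplet {T : BTree α} {a b c : α} (hT : T.nodupLeaves)
    (h : T.displaysTriplet a b c) : ¬ T.displaysTriplet a c b := by
  rintro ⟨v, hv, hav, hcv, hbv⟩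
  obtain ⟨u, hu, hau, hbu, hcu⟩ := h
  rcases subtree_or_subtree_or_disjoint hT hu hv with huv | hvu | hdisj
  · exact hbv (huv.leaves_subset hbu)
  · exact hcu (hvu.leaves_subset hcv)
  · exact Finset.disjoint_left.mp hdisj hau hav

theorem sameTriplet.not_displaysTriplet {T₁ T₂ : BTree α} {a b c : α} (hT₂ : T₂.nodupLeaves)
    (hst : sameTriplet T₁ T₂ a b c) (h : T₁.displaysTriplet a b c) :
    ¬ T₂.displaysTriplet a c b := by
  obtain ⟨t₁, t₂, ht₁, ht₂, hiso⟩ := hst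
  have ha : a ∈ ({a, b, c} : Finset α) := by simp
  have hb : b ∈ ({a, b, c} : Finset α) := by simp
  have hc : c ∈ ({a, b, c} : Finset α) := by simp
  exact fun h₂ => not_displaysTriplet_of_displaysTriplet (restrict_nodupLeaves hT₂ ht₂)
    ((h.restrict ht₁ ha hb).of_iso hiso) (h₂.restrict ht₂ ha hc)

section Family

variable {GInit GTR x : BTree α} {Gs : List (BTree α)}

theorem eq_of_mem_leaves_of_pairwise_disjoint
    (hdisj : Gs.Pairwise fun a b => Disjoint a.leaves b.leaves) {G G' : BTree α}
    (hG : G ∈ Gs) (hG' : G' ∈ Gs) {a : α} (ha : a ∈ G.leaves) (ha' : a ∈ G'.leaves) :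
    G = G' := by
  by_contra hne
  have : Std.Symm fun a b : BTree α => Disjoint a.leaves b.leaves := ⟨fun _ _ h => h.symm⟩
  exact Finset.disjoint_left.mp (hdisj.forall hG hG' hne) ha ha'

theorem exists_treeOf_of_atLeastTwo (hdisj : Gs.Pairwise fun a b => Disjoint a.leaves b.leaves)
    (hx : x.leaves ⊆ unionLeaves Gs) (h2 : atLeastTwo Gs x) :
    ∃ treeOf : α → BTree α, (∀ p ∈ x.leaves, treeOf p ∈ Gs ∧ p ∈ (treeOf p).leaves) ∧
      ∃ p ∈ x.leaves, ∃ q ∈ x.leaves, treeOf p ≠ treeOf q := by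
  have htree : ∀ p, ∃ G, p ∈ x.leaves → G ∈ Gs ∧ p ∈ G.leaves := fun p => by
    by_cases hp : p ∈ x.leaves
    · obtain ⟨G, hG, hpG⟩ := mem_unionLeaves.mp (hx hp)
      exact ⟨G, fun _ => ⟨hG, hpG⟩⟩
    · exact ⟨leaf p, fun h => absurd h hp⟩
  choose treeOf htreeOf using htree
  refine ⟨treeOf, htreeOf, ?_⟩
  obtain ⟨Gi, hGi, Gj, hGj, hij, hix, hjx⟩ := h2
  obtain ⟨p, hp⟩ := leaves_nonempty Gi
  obtain ⟨q, hq⟩ := leaves_nonempty Gj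
  have hpx := hix.leaves_subset hp
  have hqx := hjx.leaves_subset hq
  refine ⟨p, hpx, q, hqx, ?_⟩
  rwa [eq_of_mem_leaves_of_pairwise_disjoint hdisj (htreeOf p hpx).1 hGi (htreeOf p hpx).2 hp,
    eq_of_mem_leaves_of_pairwise_disjoint hdisj (htreeOf q hqx).1 hGj (htreeOf q hqx).2 hq]

theorem subtree_or_disjoint_of_atLeastTwo (hndI : GInit.nodupLeaves)
    (hsub : ∀ G ∈ Gs, Subtree G GInit) (hdisj : Gs.Pairwise fun a b => Disjoint a.leaves b.leaves)
    (hx : Subtree x GInit) (h2 : atLeastTwo Gs x) {G : BTree α} (hG : G ∈ Gs) :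
    Subtree G x ∨ Disjoint G.leaves x.leaves := by
  obtain ⟨Gi, hGi, Gj, hGj, hij, hix, hjx⟩ := h2
  rcases subtree_or_subtree_or_disjoint hndI hx (hsub G hG) with hxG | hGx | hdisjx
  · have hmem : ∀ H, Subtree H x → ∃ a ∈ H.leaves, a ∈ G.leaves := fun H hH =>
      let ⟨a, ha⟩ := leaves_nonempty H
      ⟨a, ha, (hH.trans hxG).leaves_subset ha⟩
    obtain ⟨a, ha, haG⟩ := hmem Gi hix
    obtain ⟨b, hb, hbG⟩ := hmem Gj hjx
    exact absurd ((eq_of_mem_leaves_of_pairwise_disjoint hdisj hGi hG ha haG).trans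
      (eq_of_mem_leaves_of_pairwise_disjoint hdisj hGj hG hb hbG).symm) hij
  · exact .inl hGx
  · exact .inr hdisjx.symm

theorem not_displaysTriplet_of_tripletRespecting (hndT : GTR.nodupLeaves)
    (htrip : tripletRespecting GInit GTR Gs) {Ga Gb Gc : BTree α} (hGa : Ga ∈ Gs)
    (hGb : Gb ∈ Gs) (hGc : Gc ∈ Gs) (hab : Ga ≠ Gb) (hac : Ga ≠ Gc) (hbc : Gb ≠ Gc)
    {a b c : α} (ha : a ∈ Ga.leaves) (hb : b ∈ Gb.leaves) (hc : c ∈ Gc.leaves)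
    (h : GInit.displaysTriplet a b c) : ¬ GTR.displaysTriplet a c b :=
  (htrip Ga hGa Gb hGb Gc hGc hab hac hbc a ha b hb c hc).not_displaysTriplet hndT h

theorem leaves_lcaSub_eq (hndI : GInit.nodupLeaves) (hndT : GTR.nodupLeaves)
    (hsub : ∀ G ∈ Gs, Subtree G GInit) (hdisj : Gs.Pairwise fun a b => Disjoint a.leaves b.leaves)
    (hcover : unionLeaves Gs = GInit.leaves) (hleaves : GTR.leaves = GInit.leaves)
    (htrip : tripletRespecting GInit GTR Gs) (hx : Subtree x GInit) (h2 : atLeastTwo Gs x) :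
    (lcaSub GTR x.leaves).leaves = x.leaves := by
  obtain ⟨treeOf, htreeOf, p, hp, q, hq, hpq⟩ :=
    exists_treeOf_of_atLeastTwo hdisj (hcover ▸ hx.leaves_subset) h2
  have hmem : ∀ p ∈ x.leaves, treeOf p ∈ Gs := fun p hp => (htreeOf p hp).1
  replace htreeOf : ∀ p ∈ x.leaves, p ∈ (treeOf p).leaves := fun p hp => (htreeOf p hp).2
  obtain ⟨yl, yr, hyeq, a, hax, hal, b, hbx, hbr, hab⟩ :=
    exists_lcaSub_eq_node_apply_ne (hleaves ▸ hx.leaves_subset) treeOf hp hq hpq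
  have hy : Subtree (node yl yr) GTR := hyeq ▸ lcaSub_subtree GTR x.leaves
  obtain ⟨-, -, hlr⟩ := hy.nodupLeaves hndT
  rw [hyeq]
  refine Finset.Subset.antisymm (fun c hcy => ?_)
    (hyeq ▸ subset_leaves_lcaSub (hleaves ▸ hx.leaves_subset))
  by_contra hcx
  obtain ⟨Gc, hGc, hcG⟩ := mem_unionLeaves.mp (hcover ▸ hleaves ▸ hy.leaves_subset hcy)
  have hGcx : Disjoint Gc.leaves x.leaves :=
    (subtree_or_disjoint_of_atLeastTwo hndI hsub hdisj hx h2 hGc).resolve_left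
      fun h => hcx (h.leaves_subset hcG)
  have hne_c : ∀ p ∈ x.leaves, treeOf p ≠ Gc := fun p hp h =>
    Finset.disjoint_left.mp hGcx (h ▸ htreeOf p hp) hp
  have hInit : GInit.displaysTriplet a b c := ⟨x, hx, hax, hbx, hcx⟩
  rcases Finset.mem_union.mp hcy with hcl | hcr
  · exact not_displaysTriplet_of_tripletRespecting hndT htrip (hmem a hax) (hmem b hbx) hGc hab
      (hne_c a hax) (hne_c b hbx) (htreeOf a hax) (htreeOf b hbx) hcG hInit
      ⟨yl, (Subtree.left (.refl _)).trans hy, hal, hcl, Finset.disjoint_right.mp hlr hbr⟩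
  · exact not_displaysTriplet_of_tripletRespecting hndT htrip (hmem b hbx) (hmem a hax) hGc
      hab.symm (hne_c b hbx) (hne_c a hax) (htreeOf b hbx) (htreeOf a hax) hcG hInit.swap
      ⟨yr, (Subtree.right (.refl _)).trans hy, hbr, hcr, Finset.disjoint_left.mp hlr hal⟩

end Family

end BTree

theorem stmt19_general {α : Type} [DecidableEq α] (GInit GTR : BTree α) (Gs : List (BTree α))
    (hndI : GInit.nodupLeaves) (hndT : GTR.nodupLeaves)
    (hsub : ∀ Gi ∈ Gs, BTree.Subtree Gi GInit)
    (hdisj : Gs.Pairwise fun a b => Disjoint a.leaves b.leaves)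
    (hcover : BTree.unionLeaves Gs = GInit.leaves)
    (hleaves : GTR.leaves = GInit.leaves)
    (htrip : BTree.tripletRespecting GInit GTR Gs) :
    (∀ x, BTree.Subtree x GInit → BTree.atLeastTwo Gs x →
        ∃ y, BTree.Subtree y GTR ∧ y.leaves = x.leaves) ∧
      ∀ x x' y y', BTree.Subtree x GInit → BTree.Subtree x' GInit →
        BTree.atLeastTwo Gs x → BTree.atLeastTwo Gs x' →
        BTree.Subtree y GTR → BTree.Subtree y' GTR →
        y.leaves = x.leaves → y'.leaves = x'.leaves →
        (BTree.Subtree x' x ↔ BTree.Subtree y' y) := by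
  refine ⟨fun x hx h2 => ⟨_, BTree.lcaSub_subtree GTR x.leaves,
    BTree.leaves_lcaSub_eq hndI hndT hsub hdisj hcover hleaves htrip hx h2⟩, ?_⟩
  intro x x' y y' hx hx' _ _ hy hy' hyx hyx'
  rw [BTree.subtree_iff_leaves_subset hndI hx hx', BTree.subtree_iff_leaves_subset hndT hy hy',
    hyx, hyx']

/-- every node of `G^{Init}` with `|𝒢(x)| ≥ 2` has a
counterpart in `G^{TR}` with the same leaf set, and the ancestor relation
between such counterparts coincides with the one in `G^{Init}`. -/
theorem stmt19 {α : Type} [DecidableEq α] (GInit GTR : BTree α) (Gs : List (BTree α))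
    (hndI : GInit.nodupLeaves) (hndT : GTR.nodupLeaves)
    (hsub : ∀ Gi ∈ Gs, BTree.Subtree Gi GInit)
    (hdisj : Gs.Pairwise fun a b => Disjoint a.leaves b.leaves)
    (hcover : BTree.unionLeaves Gs = GInit.leaves)
    (hk : 2 ≤ Gs.length)
    (hleaves : GTR.leaves = GInit.leaves)
    (hdisp : ∀ Gi ∈ Gs, GTR.displays Gi)
    (htrip : BTree.tripletRespecting GInit GTR Gs) :
    (∀ x, BTree.Subtree x GInit → BTree.atLeastTwo Gs x →
        ∃ y, BTree.Subtree y GTR ∧ y.leaves = x.leaves) ∧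
      ∀ x x' y y', BTree.Subtree x GInit → BTree.Subtree x' GInit →
        BTree.atLeastTwo Gs x → BTree.atLeastTwo Gs x' →
        BTree.Subtree y GTR → BTree.Subtree y' GTR →
        y.leaves = x.leaves → y'.leaves = x'.leaves →
        (BTree.Subtree x' x ↔ BTree.Subtree y' y) :=
  stmt19_general GInit GTR Gs hndI hndT hsub hdisj hcover hleaves htrip
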